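/- In the structure-constant expansion s_λ(x|a)·s_μ(x|a) = Σ_ν c^ν_{λμ}(a)·s_ν(x|a) in the factorial Schur basis, the coefficient c^ν_{λμ}(a) vanishes unless both λ ⊆ ν and μ ⊆ ν; and when μ = ν, c^μ_{λμ}(a) = s_λ(a_μ | a), where a_μ = (a_{μ_1+p},...,a_{μ_p+1}). -/
import Mathlib


open Finset
open scoped Classical

noncomputable section

variable {R : Type*} [CommRing R]

/-- shifted sequence: `(τ^s a)_n = a_{n+s}` -/
def shiftSeq (a : ℤ → R) (s : ℤ) : ℤ → R := fun n => a (n + s)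

/-- factorial complete homogeneous function `h_k(x|a)`
    (`= Σ_{1≤i_1≤...≤i_k≤p} ∏_r (x_{i_r} - a_{i_r + r - 1})`, `0` for `k < 0`) -/
def fh (p : ℕ) (x : Fin p → R) (a : ℤ → R) (k : ℤ) : R :=
  if 0 ≤ k then
    ∑ f ∈ Finset.univ.filter (fun f : Fin k.toNat → Fin p => Monotone f),
      ∏ r : Fin k.toNat, (x (f r) - a (((f r : ℕ) : ℤ) + ((r : ℕ) : ℤ) + 1))
  else 0

/-- factorial elementary function `e_k(x|a)`
    (`= Σ_{1≤i_1<...<i_k≤p} ∏_r (x_{i_r} - a_{i_r - r + 1})`, `0` for `k < 0`;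
    it vanishes automatically for `k > p`) -/
def fe (p : ℕ) (x : Fin p → R) (a : ℤ → R) (k : ℤ) : R :=
  if 0 ≤ k then
    ∑ f ∈ Finset.univ.filter (fun f : Fin k.toNat → Fin p => StrictMono f),
      ∏ r : Fin k.toNat, (x (f r) - a (((f r : ℕ) : ℤ) - ((r : ℕ) : ℤ) + 1))
  else 0

/-- generalized factorial power `(y|a)^k = (y - a_1)⋯(y - a_k)` -/
def gfp (y : R) (a : ℤ → R) (k : ℕ) : R :=
  ∏ i ∈ Finset.range k, (y - a ((i : ℤ) + 1))

/-- the factorial Schur polynomial `s_λ(x|a)`, defined through the factorial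
    Jacobi-Trudi determinant `det( h_{λ_i - i + j}(x | τ^{1-j} a) )_{1≤i,j≤p}` -/
def fschur (p : ℕ) (lam : Fin p → ℕ) (x : Fin p → R) (a : ℤ → R) : R :=
  Matrix.det (Matrix.of fun i j : Fin p =>
    fh p x (shiftSeq a (-((j : ℕ) : ℤ))) (((lam i : ℕ) : ℤ) - ((i : ℕ) : ℤ) + ((j : ℕ) : ℤ)))

set_option linter.unusedSectionVars false
set_option maxHeartbeats 1000000

section Basics

lemma shiftSeq_shiftSeq (a : ℤ → R) (s t : ℤ) :
    shiftSeq (shiftSeq a s) t = shiftSeq a (s + t) := by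
  funext n; simp only [shiftSeq]; ring_nf

lemma fh_coe (p n : ℕ) (x : Fin p → R) (a : ℤ → R) :
    fh p x a (n : ℤ) = ∑ f ∈ Finset.univ.filter (fun f : Fin n → Fin p => Monotone f),
      ∏ r : Fin n, (x (f r) - a (((f r : ℕ) : ℤ) + ((r : ℕ) : ℤ) + 1)) := by
  rw [fh, if_pos (Int.natCast_nonneg n)]; rfl

lemma fe_coe (p n : ℕ) (x : Fin p → R) (a : ℤ → R) :
    fe p x a (n : ℤ) = ∑ f ∈ Finset.univ.filter (fun f : Fin n → Fin p => StrictMono f),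
      ∏ r : Fin n, (x (f r) - a (((f r : ℕ) : ℤ) - ((r : ℕ) : ℤ) + 1)) := by
  rw [fe, if_pos (Int.natCast_nonneg n)]; rfl

lemma fh_neg (p : ℕ) (x : Fin p → R) (a : ℤ → R) {k : ℤ} (hk : k < 0) : fh p x a k = 0 :=
  if_neg (by omega)

lemma fe_neg (p : ℕ) (x : Fin p → R) (a : ℤ → R) {k : ℤ} (hk : k < 0) : fe p x a k = 0 :=
  if_neg (by omega)

lemma fh_zero (p : ℕ) (x : Fin p → R) (a : ℤ → R) : fh p x a 0 = 1 := by
  rw [show (0 : ℤ) = ((0 : ℕ) : ℤ) from rfl, fh_coe]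
  have hfil : Finset.univ.filter (fun f : Fin 0 → Fin p => Monotone f) = Finset.univ :=
    Finset.filter_true_of_mem (fun f _ => fun a => a.elim0)
  rw [hfil]; simp

lemma fe_zero (p : ℕ) (x : Fin p → R) (a : ℤ → R) : fe p x a 0 = 1 := by
  rw [show (0 : ℤ) = ((0 : ℕ) : ℤ) from rfl, fe_coe]
  have hfil : Finset.univ.filter (fun f : Fin 0 → Fin p => StrictMono f) = Finset.univ :=
    Finset.filter_true_of_mem (fun f _ => fun a => a.elim0)
  rw [hfil]; simp

lemma fh_empty (x : Fin 0 → R) (a : ℤ → R) {k : ℤ} (hk : 1 ≤ k) : fh 0 x a k = 0 := by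
  obtain ⟨n, rfl⟩ : ∃ n : ℕ, k = (n : ℤ) := ⟨k.toNat, by omega⟩
  rw [fh_coe]
  have : IsEmpty (Fin n → Fin 0) := by
    have : n ≠ 0 := by omega
    obtain ⟨m, rfl⟩ := Nat.exists_eq_succ_of_ne_zero this
    exact ⟨fun f => (f 0).elim0⟩
  rw [Finset.univ_eq_empty, Finset.filter_empty, Finset.sum_empty]

lemma fe_of_gt (p : ℕ) (x : Fin p → R) (a : ℤ → R) {k : ℤ} (hk : (p : ℤ) < k) :
    fe p x a k = 0 := by
  obtain ⟨n, rfl⟩ : ∃ n : ℕ, k = (n : ℤ) := ⟨k.toNat, by omega⟩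
  rw [fe_coe, Finset.filter_false_of_mem, Finset.sum_empty]
  intro f _ hf
  have := Fintype.card_le_of_injective f hf.injective
  simp only [Fintype.card_fin] at this; omega

lemma gfp_zero (y : R) (a : ℤ → R) : gfp y a 0 = 1 := by simp [gfp]

lemma gfp_succ (y : R) (a : ℤ → R) (m : ℕ) :
    gfp y a (m + 1) = gfp y a m * (y - a ((m : ℤ) + 1)) := by
  rw [gfp, gfp, Finset.prod_range_succ]

lemma gfp_add (y : R) (a : ℤ → R) (s t : ℕ) :
    gfp y a (s + t) = gfp y a s * gfp y (shiftSeq a (s : ℤ)) t := by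
  rw [gfp, gfp, gfp, Finset.prod_range_add]
  congr 1
  refine Finset.prod_congr rfl (fun i _ => ?_)
  simp only [shiftSeq]
  congr 1
  push_cast; ring

end Basics

section Monos

lemma monotone_snoc {q n : ℕ} (g : Fin n → Fin (q+1)) (hg : Monotone g) :
    Monotone (Fin.snoc g (Fin.last q) : Fin (n+1) → Fin (q+1)) := by
  intro i j hij
  induction j using Fin.lastCases with
  | last => rw [Fin.snoc_last]; exact Fin.le_last _
  | cast j' =>
    induction i using Fin.lastCases with
    | last => exact absurd (lt_of_le_of_lt hij (Fin.castSucc_lt_last j')) (lt_irrefl _)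
    | cast i' =>
      rw [Fin.snoc_castSucc, Fin.snoc_castSucc]
      exact hg (by rwa [Fin.castSucc_le_castSucc_iff] at hij)

lemma strictMono_snoc {q n : ℕ} (g : Fin n → Fin q) (hg : StrictMono g) :
    StrictMono (Fin.snoc (Fin.castSucc ∘ g) (Fin.last q) : Fin (n+1) → Fin (q+1)) := by
  intro i j hij
  induction j using Fin.lastCases with
  | last =>
    have hi : i ≠ Fin.last n := Fin.ne_last_of_lt hij
    obtain ⟨i', rfl⟩ := Fin.exists_castSucc_eq.mpr hi
    rw [Fin.snoc_last, Fin.snoc_castSucc]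
    exact Fin.castSucc_lt_last _
  | cast j' =>
    have hi : i ≠ Fin.last n := Fin.ne_last_of_lt (lt_trans hij (Fin.castSucc_lt_last j'))
    obtain ⟨i', rfl⟩ := Fin.exists_castSucc_eq.mpr hi
    rw [Fin.snoc_castSucc, Fin.snoc_castSucc]
    exact Fin.castSucc_lt_castSucc_iff.mpr (hg (Fin.castSucc_lt_castSucc_iff.mp hij))

end Monos
lemma fh_succ_nat (q n : ℕ) (x : Fin (q+1) → R) (a : ℤ → R) :
    fh (q+1) x a ((n : ℤ) + 1) =
      fh q (x ∘ Fin.castSucc) a ((n : ℤ) + 1)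
        + (x (Fin.last q) - a ((q : ℤ) + (n : ℤ) + 1)) * fh (q+1) x a (n : ℤ) := by
  rw [show ((n : ℤ) + 1) = ((n + 1 : ℕ) : ℤ) by push_cast; ring]
  rw [fh_coe, fh_coe, fh_coe]
  rw [← Finset.sum_filter_add_sum_filter_not
        (Finset.univ.filter (fun f : Fin (n+1) → Fin (q+1) => Monotone f))
        (fun f => f (Fin.last n) = Fin.last q)]
  have h1 : ∑ f ∈ (Finset.univ.filter (fun f : Fin (n+1) → Fin (q+1) => Monotone f)).filter
        (fun f => f (Fin.last n) = Fin.last q),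
        ∏ r : Fin (n+1), (x (f r) - a (((f r : ℕ) : ℤ) + ((r : ℕ) : ℤ) + 1)) =
      (x (Fin.last q) - a ((q : ℤ) + (n : ℤ) + 1)) *
        ∑ f ∈ Finset.univ.filter (fun f : Fin n → Fin (q+1) => Monotone f),
          ∏ r : Fin n, (x (f r) - a (((f r : ℕ) : ℤ) + ((r : ℕ) : ℤ) + 1)) := by
    rw [Finset.mul_sum]
    refine Finset.sum_bij' (fun f _ => f ∘ Fin.castSucc)
      (fun g _ => Fin.snoc g (Fin.last q)) ?_ ?_ ?_ ?_ ?_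
    · intro f hf
      simp only [Finset.mem_filter, Finset.mem_univ, true_and] at hf ⊢
      exact hf.1.comp (fun i j hij => by rwa [Fin.castSucc_le_castSucc_iff])
    · intro g hg
      simp only [Finset.mem_filter, Finset.mem_univ, true_and] at hg ⊢
      exact ⟨monotone_snoc g hg, Fin.snoc_last _ _⟩
    · intro f hf
      simp only [Finset.mem_filter, Finset.mem_univ, true_and] at hf
      funext r
      induction r using Fin.lastCases with
      | last => rw [Fin.snoc_last]; exact hf.2.symm
      | cast r' => rw [Fin.snoc_castSucc]; rfl
    · intro g hg
      funext r
      rw [Function.comp_apply, Fin.snoc_castSucc]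
    · intro f hf
      simp only [Finset.mem_filter, Finset.mem_univ, true_and] at hf
      rw [Fin.prod_univ_castSucc, mul_comm ((x (Fin.last q)) - a ((q : ℤ) + (n : ℤ) + 1))]
      have e1 : ∀ r : Fin n, (x (f r.castSucc) - a (((f r.castSucc : ℕ) : ℤ) + ((r.castSucc : ℕ) : ℤ) + 1))
          = (x (((fun f _ => f ∘ Fin.castSucc) f hf) r) - a ((((f ∘ Fin.castSucc) r : ℕ) : ℤ) + ((r : ℕ) : ℤ) + 1)) := by
        intro r; dsimp only [Function.comp_apply]; rw [Fin.coe_castSucc]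
      have e2 : (x (f (Fin.last n)) - a (((f (Fin.last n) : ℕ) : ℤ) + ((Fin.last n : ℕ) : ℤ) + 1))
          = (x (Fin.last q) - a ((q : ℤ) + (n : ℤ) + 1)) := by
        rw [hf.2]; simp [Fin.val_last]
      rw [e2]
      exact congrArg (fun z => z * (x (Fin.last q) - a ((q : ℤ) + (n : ℤ) + 1)))
        (Finset.prod_congr rfl (fun r _ => e1 r))
  have h2 : ∑ f ∈ (Finset.univ.filter (fun f : Fin (n+1) → Fin (q+1) => Monotone f)).filter
        (fun f => ¬ f (Fin.last n) = Fin.last q),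
        ∏ r : Fin (n+1), (x (f r) - a (((f r : ℕ) : ℤ) + ((r : ℕ) : ℤ) + 1)) =
      ∑ f ∈ Finset.univ.filter (fun f : Fin (n+1) → Fin q => Monotone f),
        ∏ r : Fin (n+1), ((x ∘ Fin.castSucc) (f r) - a (((f r : ℕ) : ℤ) + ((r : ℕ) : ℤ) + 1)) := by
    have key : ∀ f ∈ (Finset.univ.filter (fun f : Fin (n+1) → Fin (q+1) => Monotone f)).filter
        (fun f => ¬ f (Fin.last n) = Fin.last q), ∀ r : Fin (n+1), f r ≠ Fin.last q := by
      intro f hf r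
      simp only [Finset.mem_filter, Finset.mem_univ, true_and] at hf
      intro hcon
      exact hf.2 (le_antisymm (Fin.le_last _) (hcon ▸ hf.1 (Fin.le_last r)))
    refine Finset.sum_bij' (fun f hf r => (f r).castPred (key f hf r))
      (fun g _ => Fin.castSucc ∘ g) ?_ ?_ ?_ ?_ ?_
    · intro f hf
      simp only [Finset.mem_filter, Finset.mem_univ, true_and] at hf ⊢
      intro i j hij
      exact Fin.castPred_le_castPred_iff.2 (hf.1 hij)
    · intro g hg
      simp only [Finset.mem_filter, Finset.mem_univ, true_and] at hg ⊢
      constructor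
      · exact (fun i j hij => by
          simp only [Function.comp_apply, Fin.castSucc_le_castSucc_iff]; exact hg hij)
      · intro hcon
        have := congrArg Fin.val hcon
        simp only [Function.comp_apply, Fin.coe_castSucc, Fin.val_last] at this
        exact absurd this (Nat.ne_of_lt (g (Fin.last n)).2)
    · intro f hf; funext r; simp [Fin.castSucc_castPred]
    · intro g hg; funext r; simp [Fin.castPred_castSucc]
    · intro f hf
      refine Finset.prod_congr rfl (fun r _ => ?_)
      dsimp only
      rw [Function.comp_apply, Fin.castSucc_castPred, Fin.coe_castPred]
  rw [h1, h2]; ring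
lemma fe_succ_nat (q n : ℕ) (x : Fin (q+1) → R) (a : ℤ → R) :
    fe (q+1) x a ((n : ℤ) + 1) =
      fe q (x ∘ Fin.castSucc) a ((n : ℤ) + 1)
        + (x (Fin.last q) - a ((q : ℤ) - (n : ℤ) + 1)) * fe q (x ∘ Fin.castSucc) a (n : ℤ) := by
  rw [show ((n : ℤ) + 1) = ((n + 1 : ℕ) : ℤ) by push_cast; ring]
  rw [fe_coe, fe_coe, fe_coe]
  rw [← Finset.sum_filter_add_sum_filter_not
        (Finset.univ.filter (fun f : Fin (n+1) → Fin (q+1) => StrictMono f))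
        (fun f => f (Fin.last n) = Fin.last q)]
  have h1 : ∑ f ∈ (Finset.univ.filter (fun f : Fin (n+1) → Fin (q+1) => StrictMono f)).filter
        (fun f => f (Fin.last n) = Fin.last q),
        ∏ r : Fin (n+1), (x (f r) - a (((f r : ℕ) : ℤ) - ((r : ℕ) : ℤ) + 1)) =
      (x (Fin.last q) - a ((q : ℤ) - (n : ℤ) + 1)) *
        ∑ g ∈ Finset.univ.filter (fun g : Fin n → Fin q => StrictMono g),
          ∏ r : Fin n, ((x ∘ Fin.castSucc) (g r) - a (((g r : ℕ) : ℤ) - ((r : ℕ) : ℤ) + 1)) := by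
    rw [Finset.mul_sum]
    have key : ∀ f ∈ (Finset.univ.filter (fun f : Fin (n+1) → Fin (q+1) => StrictMono f)).filter
        (fun f => f (Fin.last n) = Fin.last q), ∀ r : Fin n, f r.castSucc ≠ Fin.last q := by
      intro f hf r
      simp only [Finset.mem_filter, Finset.mem_univ, true_and] at hf
      exact Fin.ne_last_of_lt (hf.2 ▸ hf.1 (Fin.castSucc_lt_last r))
    refine Finset.sum_bij' (fun f hf r => (f r.castSucc).castPred (key f hf r))
      (fun g _ => Fin.snoc (Fin.castSucc ∘ g) (Fin.last q)) ?_ ?_ ?_ ?_ ?_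
    · intro f hf
      simp only [Finset.mem_filter, Finset.mem_univ, true_and] at hf ⊢
      intro i j hij
      exact Fin.castPred_lt_castPred_iff.2 (hf.1 (Fin.castSucc_lt_castSucc_iff.mpr hij))
    · intro g hg
      simp only [Finset.mem_filter, Finset.mem_univ, true_and] at hg ⊢
      exact ⟨strictMono_snoc g hg, Fin.snoc_last _ _⟩
    · intro f hf
      simp only [Finset.mem_filter, Finset.mem_univ, true_and] at hf
      funext r
      induction r using Fin.lastCases with
      | last => rw [Fin.snoc_last]; exact hf.2.symm
      | cast r' => rw [Fin.snoc_castSucc]; simp [Fin.castSucc_castPred]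
    · intro g hg
      funext r
      simp [Fin.snoc_castSucc, Fin.castPred_castSucc]
    · intro f hf
      simp only [Finset.mem_filter, Finset.mem_univ, true_and] at hf
      rw [Fin.prod_univ_castSucc, mul_comm ((x (Fin.last q)) - a ((q : ℤ) - (n : ℤ) + 1))]
      have e2 : (x (f (Fin.last n)) - a (((f (Fin.last n) : ℕ) : ℤ) - ((Fin.last n : ℕ) : ℤ) + 1))
          = (x (Fin.last q) - a ((q : ℤ) - (n : ℤ) + 1)) := by
        rw [hf.2]; simp [Fin.val_last]
      rw [e2]
      refine congrArg (fun z => z * (x (Fin.last q) - a ((q : ℤ) - (n : ℤ) + 1)))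
        (Finset.prod_congr rfl (fun r _ => ?_))
      dsimp only [Function.comp_apply]
      rw [Fin.castSucc_castPred, Fin.coe_castPred, Fin.coe_castSucc]
  have h2 : ∑ f ∈ (Finset.univ.filter (fun f : Fin (n+1) → Fin (q+1) => StrictMono f)).filter
        (fun f => ¬ f (Fin.last n) = Fin.last q),
        ∏ r : Fin (n+1), (x (f r) - a (((f r : ℕ) : ℤ) - ((r : ℕ) : ℤ) + 1)) =
      ∑ f ∈ Finset.univ.filter (fun f : Fin (n+1) → Fin q => StrictMono f),
        ∏ r : Fin (n+1), ((x ∘ Fin.castSucc) (f r) - a (((f r : ℕ) : ℤ) - ((r : ℕ) : ℤ) + 1)) := by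
    have key : ∀ f ∈ (Finset.univ.filter (fun f : Fin (n+1) → Fin (q+1) => StrictMono f)).filter
        (fun f => ¬ f (Fin.last n) = Fin.last q), ∀ r : Fin (n+1), f r ≠ Fin.last q := by
      intro f hf r
      simp only [Finset.mem_filter, Finset.mem_univ, true_and] at hf
      intro hcon
      rcases eq_or_lt_of_le (Fin.le_last r) with h | h
      · exact hf.2 (h ▸ hcon)
      · exact hf.2 (le_antisymm (Fin.le_last _) (hcon ▸ (hf.1 h).le))
    refine Finset.sum_bij' (fun f hf r => (f r).castPred (key f hf r))
      (fun g _ => Fin.castSucc ∘ g) ?_ ?_ ?_ ?_ ?_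
    · intro f hf
      simp only [Finset.mem_filter, Finset.mem_univ, true_and] at hf ⊢
      intro i j hij
      exact Fin.castPred_lt_castPred_iff.2 (hf.1 hij)
    · intro g hg
      simp only [Finset.mem_filter, Finset.mem_univ, true_and] at hg ⊢
      constructor
      · intro i j hij
        exact Fin.castSucc_lt_castSucc_iff.mpr (hg hij)
      · intro hcon
        have := congrArg Fin.val hcon
        simp only [Function.comp_apply, Fin.coe_castSucc, Fin.val_last] at this
        exact absurd this (Nat.ne_of_lt (g (Fin.last n)).2)
    · intro f hf; funext r; simp [Fin.castSucc_castPred]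
    · intro g hg; funext r; simp [Fin.castPred_castSucc]
    · intro f hf
      refine Finset.prod_congr rfl (fun r _ => ?_)
      dsimp only [Function.comp_apply]
      rw [Fin.castSucc_castPred, Fin.coe_castPred]
  rw [h1, h2]; ring

lemma fh_succ (q : ℕ) (x : Fin (q+1) → R) (a : ℤ → R) (k : ℤ) :
    fh (q+1) x a k = fh q (x ∘ Fin.castSucc) a k
      + (x (Fin.last q) - a ((q : ℤ) + k)) * fh (q+1) x a (k-1) := by
  rcases lt_trichotomy k 0 with h | h | h
  · rw [fh_neg _ _ _ h, fh_neg _ _ _ h, fh_neg _ _ _ (by omega : k - 1 < 0)]; ring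
  · subst h
    rw [fh_zero, fh_zero, fh_neg _ _ _ (by norm_num : (0:ℤ) - 1 < 0)]; ring
  · obtain ⟨n, rfl⟩ : ∃ n : ℕ, k = (n : ℤ) + 1 := ⟨(k-1).toNat, by omega⟩
    rw [show (q : ℤ) + ((n : ℤ) + 1) = (q : ℤ) + (n : ℤ) + 1 by ring,
      show (n : ℤ) + 1 - 1 = (n : ℤ) by ring]
    exact fh_succ_nat q n x a

lemma fe_succ (q : ℕ) (x : Fin (q+1) → R) (a : ℤ → R) (k : ℤ) :
    fe (q+1) x a k = fe q (x ∘ Fin.castSucc) a k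
      + (x (Fin.last q) - a ((q : ℤ) - k + 2)) * fe q (x ∘ Fin.castSucc) a (k-1) := by
  rcases lt_trichotomy k 0 with h | h | h
  · rw [fe_neg _ _ _ h, fe_neg _ _ _ h, fe_neg _ _ _ (by omega : k - 1 < 0)]; ring
  · subst h
    rw [fe_zero, fe_zero, fe_neg _ _ _ (by norm_num : (0:ℤ) - 1 < 0)]; ring
  · obtain ⟨n, rfl⟩ : ∃ n : ℕ, k = (n : ℤ) + 1 := ⟨(k-1).toNat, by omega⟩
    rw [show (q : ℤ) - ((n : ℤ) + 1) + 2 = (q : ℤ) - (n : ℤ) + 1 by ring,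
      show (n : ℤ) + 1 - 1 = (n : ℤ) by ring]
    exact fe_succ_nat q n x a

/-- Identity I_E: `∏ᵢ (y - xᵢ) = Σᵣ (-1)ʳ eᵣ(x|τˢa) (y|τˢa)^{p-r}`. -/
lemma IE (p : ℕ) (x : Fin p → R) (a : ℤ → R) (s : ℤ) (y : R) :
    ∏ i : Fin p, (y - x i) =
      ∑ r ∈ Finset.range (p+1),
        (-1 : R)^r * fe p x (shiftSeq a s) (r : ℤ) * gfp y (shiftSeq a s) (p - r) := by
  induction p with
  | zero => simp [fe_zero, gfp_zero]
  | succ q ih =>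
    set b := shiftSeq a s with hb
    have step1 : ∑ r ∈ Finset.range (q+2), (-1 : R)^r * fe (q+1) x b (r : ℤ) * gfp y b (q+1-r) =
        (∑ r ∈ Finset.range (q+2), (-1 : R)^r * fe q (x ∘ Fin.castSucc) b (r : ℤ) * gfp y b (q+1-r))
        + (∑ r ∈ Finset.range (q+2), (-1 : R)^r *
            ((x (Fin.last q) - b ((q : ℤ) - (r : ℤ) + 2)) * fe q (x ∘ Fin.castSucc) b ((r : ℤ)-1))
            * gfp y b (q+1-r)) := by
      rw [← Finset.sum_add_distrib]
      refine Finset.sum_congr rfl (fun r _ => ?_)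
      rw [fe_succ q x b (r : ℤ)]; ring
    have step2 : ∑ r ∈ Finset.range (q+2), (-1 : R)^r *
            ((x (Fin.last q) - b ((q : ℤ) - (r : ℤ) + 2)) * fe q (x ∘ Fin.castSucc) b ((r : ℤ)-1))
            * gfp y b (q+1-r) =
        ∑ r ∈ Finset.range (q+1), -((-1 : R)^r *
            (x (Fin.last q) - b ((q : ℤ) - (r : ℤ) + 1)) * fe q (x ∘ Fin.castSucc) b (r : ℤ)
            * gfp y b (q-r)) := by
      rw [Finset.sum_range_succ']
      have h0 : (-1 : R)^0 *
            ((x (Fin.last q) - b ((q : ℤ) - ((0:ℕ) : ℤ) + 2)) * fe q (x ∘ Fin.castSucc) b (((0:ℕ) : ℤ)-1))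
            * gfp y b (q+1-0) = 0 := by
        rw [fe_neg _ _ _ (by norm_num : ((0:ℕ) : ℤ) - 1 < 0)]; ring
      rw [h0, add_zero]
      refine Finset.sum_congr rfl (fun r hr => ?_)
      have hr' : r ≤ q := by simp at hr; omega
      rw [show (((r+1 : ℕ)) : ℤ) - 1 = (r : ℤ) by push_cast; ring,
        show ((q : ℤ) - ((r+1 : ℕ) : ℤ) + 2) = (q : ℤ) - (r : ℤ) + 1 by push_cast; ring,
        show q + 1 - (r + 1) = q - r by omega, pow_succ]
      ring
    have step3 : ∑ r ∈ Finset.range (q+2), (-1 : R)^r * fe q (x ∘ Fin.castSucc) b (r : ℤ) * gfp y b (q+1-r)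
        = ∑ r ∈ Finset.range (q+1), ((-1 : R)^r * fe q (x ∘ Fin.castSucc) b (r : ℤ) * gfp y b (q-r))
            * (y - b ((q : ℤ) - (r : ℤ) + 1)) := by
      rw [Finset.sum_range_succ]
      rw [fe_of_gt q _ b (by push_cast; omega : (q : ℤ) < ((q+1 : ℕ) : ℤ))]
      rw [mul_zero, zero_mul, add_zero]
      refine Finset.sum_congr rfl (fun r hr => ?_)
      have hr' : r ≤ q := by simp at hr; omega
      rw [show q + 1 - r = (q - r) + 1 by omega, gfp_succ,
        show (((q - r : ℕ)) : ℤ) + 1 = (q : ℤ) - (r : ℤ) + 1 by omega]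
      ring
    rw [step1, step2, step3, ← Finset.sum_add_distrib]
    have : ∀ r ∈ Finset.range (q+1),
        ((-1 : R)^r * fe q (x ∘ Fin.castSucc) b (r : ℤ) * gfp y b (q-r)) * (y - b ((q : ℤ) - (r : ℤ) + 1))
        + -((-1 : R)^r * (x (Fin.last q) - b ((q : ℤ) - (r : ℤ) + 1)) * fe q (x ∘ Fin.castSucc) b (r : ℤ)
            * gfp y b (q-r))
        = ((-1 : R)^r * fe q (x ∘ Fin.castSucc) b (r : ℤ) * gfp y b (q-r)) * (y - x (Fin.last q)) := by
      intro r _; ring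
    rw [Finset.sum_congr rfl this, ← Finset.sum_mul, ← ih (x ∘ Fin.castSucc),
      Fin.prod_univ_castSucc]
    rfl

/-- Identity I_H: `Σᵣ (-1)ʳ eᵣ(x|τ^{k-1}a) h_{k-r}(x|a) = 0` for `k ≥ 1`. -/
lemma IHid (p : ℕ) (x : Fin p → R) (a : ℤ → R) (k : ℤ) (hk : 1 ≤ k) :
    ∑ r ∈ Finset.range (p+1),
      (-1 : R)^r * fe p x (shiftSeq a (k-1)) (r : ℤ) * fh p x a (k - r) = 0 := by
  induction p with
  | zero =>
    simp [fe_zero, fh_empty x a hk]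
  | succ q ih =>
    set c := shiftSeq a (k-1) with hc
    have expand : ∀ r ∈ Finset.range (q+2),
        (-1 : R)^r * fe (q+1) x c (r : ℤ) * fh (q+1) x a (k - r) =
          (-1 : R)^r * fe q (x ∘ Fin.castSucc) c (r : ℤ) * fh q (x ∘ Fin.castSucc) a (k - r)
          + (-1 : R)^r * fe q (x ∘ Fin.castSucc) c (r : ℤ) *
              ((x (Fin.last q) - a ((q : ℤ) + (k - r))) * fh (q+1) x a (k - r - 1))
          + (-1 : R)^r * ((x (Fin.last q) - c ((q : ℤ) - (r : ℤ) + 2)) *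
              fe q (x ∘ Fin.castSucc) c ((r : ℤ) - 1)) * fh (q+1) x a (k - r) := by
      intro r _
      rw [fe_succ q x c (r : ℤ), fh_succ q x a (k - r)]
      ring
    rw [Finset.sum_congr rfl expand, Finset.sum_add_distrib, Finset.sum_add_distrib]
    have T1 : ∑ r ∈ Finset.range (q+2),
        (-1 : R)^r * fe q (x ∘ Fin.castSucc) c (r : ℤ) * fh q (x ∘ Fin.castSucc) a (k - r) = 0 := by
      rw [Finset.sum_range_succ,
        fe_of_gt q _ c (by push_cast; omega : (q : ℤ) < ((q+1 : ℕ) : ℤ))]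
      rw [mul_zero, zero_mul, add_zero]
      exact ih (x ∘ Fin.castSucc)
    have T23 : ∑ r ∈ Finset.range (q+2),
        (-1 : R)^r * fe q (x ∘ Fin.castSucc) c (r : ℤ) *
          ((x (Fin.last q) - a ((q : ℤ) + (k - r))) * fh (q+1) x a (k - r - 1))
        + ∑ r ∈ Finset.range (q+2),
        (-1 : R)^r * ((x (Fin.last q) - c ((q : ℤ) - (r : ℤ) + 2)) *
          fe q (x ∘ Fin.castSucc) c ((r : ℤ) - 1)) * fh (q+1) x a (k - r) = 0 := by
      have e2 : ∑ r ∈ Finset.range (q+2),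
          (-1 : R)^r * fe q (x ∘ Fin.castSucc) c (r : ℤ) *
            ((x (Fin.last q) - a ((q : ℤ) + (k - r))) * fh (q+1) x a (k - r - 1)) =
          ∑ r ∈ Finset.range (q+1),
          (-1 : R)^r * fe q (x ∘ Fin.castSucc) c (r : ℤ) *
            ((x (Fin.last q) - a ((q : ℤ) + (k - r))) * fh (q+1) x a (k - r - 1)) := by
        rw [Finset.sum_range_succ,
          fe_of_gt q _ c (by push_cast; omega : (q : ℤ) < ((q+1 : ℕ) : ℤ))]
        rw [mul_zero, zero_mul, add_zero]
      have e3 : ∑ r ∈ Finset.range (q+2),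
          (-1 : R)^r * ((x (Fin.last q) - c ((q : ℤ) - (r : ℤ) + 2)) *
            fe q (x ∘ Fin.castSucc) c ((r : ℤ) - 1)) * fh (q+1) x a (k - r) =
          ∑ r ∈ Finset.range (q+1),
          -((-1 : R)^r * ((x (Fin.last q) - a ((q : ℤ) + (k - r))) *
            fe q (x ∘ Fin.castSucc) c (r : ℤ)) * fh (q+1) x a (k - r - 1)) := by
        rw [Finset.sum_range_succ']
        have h0 : (-1 : R)^0 * ((x (Fin.last q) - c ((q : ℤ) - ((0:ℕ) : ℤ) + 2)) *
            fe q (x ∘ Fin.castSucc) c (((0:ℕ) : ℤ) - 1)) * fh (q+1) x a (k - (0:ℕ)) = 0 := by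
          rw [fe_neg _ _ _ (by norm_num : ((0:ℕ) : ℤ) - 1 < 0)]; ring
        rw [h0, add_zero]
        refine Finset.sum_congr rfl (fun r hr => ?_)
        have hcv : c ((q : ℤ) - ((r+1 : ℕ) : ℤ) + 2) = a ((q : ℤ) + (k - r)) := by
          rw [hc]; simp only [shiftSeq]; congr 1; push_cast; ring
        rw [hcv,
          show (((r+1 : ℕ)) : ℤ) - 1 = (r : ℤ) by push_cast; ring,
          show k - ((r+1 : ℕ) : ℤ) = k - r - 1 by push_cast; ring,
          pow_succ]
        ring
      rw [e2, e3, ← Finset.sum_add_distrib]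
      refine Finset.sum_eq_zero (fun r _ => ?_)
      ring
    rw [add_assoc, T1, T23, add_zero]

section Master

/-- the Jacobi–Trudi matrix -/
def JTm (p : ℕ) (x : Fin p → R) (a : ℤ → R) (κ : Fin p → ℕ) : Matrix (Fin p) (Fin p) R :=
  Matrix.of fun i j : Fin p =>
    fh p x (shiftSeq a (-((j : ℕ) : ℤ))) (((κ i : ℕ) : ℤ) - ((i : ℕ) : ℤ) + ((j : ℕ) : ℤ))

lemma fschur_eq_det_JTm (p : ℕ) (x : Fin p → R) (a : ℤ → R) (κ : Fin p → ℕ) :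
    fschur p κ x a = (JTm p x a κ).det := rfl

/-- the `gfp` alternant matrix -/
def Alt (p : ℕ) (x : Fin p → R) (a : ℤ → R) (κ : Fin p → ℕ) : Matrix (Fin p) (Fin p) R :=
  Matrix.of fun i j : Fin p => gfp (x j) a (κ i + (p - 1 - (i : ℕ)))

lemma JTm_zero_triangular (p : ℕ) (x : Fin p → R) (a : ℤ → R) :
    (JTm p x a (fun _ => 0)).BlockTriangular id := by
  intro i j hij
  refine fh_neg _ _ _ ?_
  have hij' : (j : ℕ) < (i : ℕ) := by
    have h := hij
    simp only [id_eq] at h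
    exact h
  simp only [Nat.cast_zero]
  omega

lemma det_JTm_zero (p : ℕ) (x : Fin p → R) (a : ℤ → R) :
    (JTm p x a (fun _ => 0)).det = 1 := by
  rw [Matrix.det_of_upperTriangular (JTm_zero_triangular p x a)]
  refine Finset.prod_eq_one (fun i _ => ?_)
  show fh p x _ (((0:ℕ) : ℤ) - ((i : ℕ) : ℤ) + ((i : ℕ) : ℤ)) = 1
  rw [show ((0:ℕ) : ℤ) - ((i : ℕ) : ℤ) + ((i : ℕ) : ℤ) = 0 by ring]
  exact fh_zero _ _ _

lemma prop_gfp (p : ℕ) (x : Fin p → R) (a : ℤ → R) (m : ℕ) (j : Fin p) :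
    gfp (x j) a m = ∑ l : Fin p, fh p x (shiftSeq a (-((l : ℕ) : ℤ))) ((m : ℤ) - p + 1 + l) *
      ((JTm p x a (fun _ => 0))⁻¹ * Alt p x a (fun _ => 0)) l j := by
  induction m using Nat.strong_induction_on generalizing j with
  | _ m IHm =>
  set C : Matrix (Fin p) (Fin p) R := (JTm p x a (fun _ => 0))⁻¹ * Alt p x a (fun _ => 0) with hC
  by_cases hm : m < p
  · -- base case
    have hH : (JTm p x a (fun _ => 0)) * C = Alt p x a (fun _ => 0) := by
      rw [hC]
      exact Matrix.mul_nonsing_inv_cancel_left _ _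
        (by rw [det_JTm_zero]; exact isUnit_one)
    set i : Fin p := ⟨p - 1 - m, by omega⟩ with hi
    have hrow : ∑ l : Fin p, JTm p x a (fun _ => 0) i l * C l j
        = Alt p x a (fun _ => 0) i j := by
      rw [← Matrix.mul_apply, hH]
    have h1 : ∀ l : Fin p, JTm p x a (fun _ => 0) i l =
        fh p x (shiftSeq a (-((l : ℕ) : ℤ))) ((m : ℤ) - p + 1 + l) := by
      intro l
      show fh p x _ (((0:ℕ) : ℤ) - ((i : ℕ) : ℤ) + ((l : ℕ) : ℤ)) = _
      congr 1
      have : (i : ℕ) = p - 1 - m := rfl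
      omega
    have h2 : Alt p x a (fun _ => 0) i j = gfp (x j) a m := by
      show gfp (x j) a (0 + (p - 1 - (i : ℕ))) = gfp (x j) a m
      congr 1
      have : (i : ℕ) = p - 1 - m := rfl
      omega
    rw [← h2, ← hrow]
    exact Finset.sum_congr rfl (fun l _ => by rw [h1 l])
  · -- inductive step
    push_neg at hm
    have hGA : ∑ r ∈ Finset.range (p+1), (-1:R)^r * fe p x (shiftSeq a ((m:ℤ) - p)) (r : ℤ) *
        gfp (x j) a (m - r) = 0 := by
      have hIE := IE p x a ((m:ℤ) - p) (x j)
      have hprod : ∏ i : Fin p, (x j - x i) = 0 :=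
        Finset.prod_eq_zero (Finset.mem_univ j) (by simp)
      have hmul := congrArg (fun z => gfp (x j) a (m - p) * z) (hIE.symm.trans hprod)
      simp only [Finset.mul_sum, mul_zero] at hmul
      have hterm : ∀ r ∈ Finset.range (p+1),
          (-1:R)^r * fe p x (shiftSeq a ((m:ℤ) - p)) (r : ℤ) * gfp (x j) a (m - r)
          = gfp (x j) a (m - p) * ((-1:R)^r * fe p x (shiftSeq a ((m:ℤ) - p)) (r : ℤ) *
              gfp (x j) (shiftSeq a ((m:ℤ) - p)) (p - r)) := by
        intro r hr
        have hr' : r ≤ p := by simp at hr; omega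
        have hsh : ((m:ℤ) - p) = (((m - p : ℕ)) : ℤ) := by omega
        rw [hsh]
        have hadd := gfp_add (x j) a (m - p) (p - r)
        rw [show (m - p) + (p - r) = m - r by omega] at hadd
        rw [hadd]
        ring
      rw [Finset.sum_congr rfl hterm]
      exact hmul
    have hGB : ∀ l : Fin p, ∑ r ∈ Finset.range (p+1),
        (-1:R)^r * fe p x (shiftSeq a ((m:ℤ) - p)) (r : ℤ) *
          fh p x (shiftSeq a (-((l : ℕ) : ℤ))) ((m : ℤ) - p + 1 + l - r) = 0 := by
      intro l
      have hk : (1:ℤ) ≤ (m : ℤ) - p + 1 + l := by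
        have : (0:ℤ) ≤ (l : ℕ) := Int.natCast_nonneg _
        omega
      have := IHid p x (shiftSeq a (-((l : ℕ) : ℤ))) ((m : ℤ) - p + 1 + l) hk
      rw [shiftSeq_shiftSeq,
        show (-((l : ℕ) : ℤ) + ((m : ℤ) - p + 1 + l - 1)) = (m : ℤ) - p from by ring] at this
      exact this
    have key : ∑ r ∈ Finset.range (p+1), (-1:R)^r * fe p x (shiftSeq a ((m:ℤ) - p)) (r : ℤ) *
        (gfp (x j) a (m - r) -
          ∑ l : Fin p, fh p x (shiftSeq a (-((l : ℕ) : ℤ))) ((m : ℤ) - p + 1 + l - r) * C l j)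
        = 0 := by
      have h1 : ∀ r ∈ Finset.range (p+1),
          (-1:R)^r * fe p x (shiftSeq a ((m:ℤ) - p)) (r : ℤ) *
            (gfp (x j) a (m - r) -
              ∑ l : Fin p, fh p x (shiftSeq a (-((l : ℕ) : ℤ))) ((m : ℤ) - p + 1 + l - r) * C l j)
          = (-1:R)^r * fe p x (shiftSeq a ((m:ℤ) - p)) (r : ℤ) * gfp (x j) a (m - r)
            - ∑ l : Fin p, (-1:R)^r * fe p x (shiftSeq a ((m:ℤ) - p)) (r : ℤ) *
                (fh p x (shiftSeq a (-((l : ℕ) : ℤ))) ((m : ℤ) - p + 1 + l - r) * C l j) := by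
        intro r _
        rw [mul_sub, Finset.mul_sum]
      rw [Finset.sum_congr rfl h1, Finset.sum_sub_distrib, hGA, Finset.sum_comm]
      have h2 : ∀ l : Fin p, (l ∈ Finset.univ) → ∑ r ∈ Finset.range (p+1),
          (-1:R)^r * fe p x (shiftSeq a ((m:ℤ) - p)) (r : ℤ) *
            (fh p x (shiftSeq a (-((l : ℕ) : ℤ))) ((m : ℤ) - p + 1 + l - r) * C l j) = 0 := by
        intro l _
        have : ∑ r ∈ Finset.range (p+1),
            (-1:R)^r * fe p x (shiftSeq a ((m:ℤ) - p)) (r : ℤ) *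
              (fh p x (shiftSeq a (-((l : ℕ) : ℤ))) ((m : ℤ) - p + 1 + l - r) * C l j)
            = (∑ r ∈ Finset.range (p+1),
              (-1:R)^r * fe p x (shiftSeq a ((m:ℤ) - p)) (r : ℤ) *
                fh p x (shiftSeq a (-((l : ℕ) : ℤ))) ((m : ℤ) - p + 1 + l - r)) * C l j := by
          rw [Finset.sum_mul]
          exact Finset.sum_congr rfl (fun r _ => by ring)
        rw [this, hGB l, zero_mul]
      rw [Finset.sum_eq_zero h2]
      simp
    have key2 : ∀ r ∈ Finset.range (p+1), r ≠ 0 →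
        (-1:R)^r * fe p x (shiftSeq a ((m:ℤ) - p)) (r : ℤ) *
        (gfp (x j) a (m - r) -
          ∑ l : Fin p, fh p x (shiftSeq a (-((l : ℕ) : ℤ))) ((m : ℤ) - p + 1 + l - r) * C l j)
        = 0 := by
      intro r hr hr0
      have hr' : r ≤ p := by simp at hr; omega
      have hIH := IHm (m - r) (by omega) j
      have hcst : ∀ l : Fin p, fh p x (shiftSeq a (-((l : ℕ) : ℤ))) (((m - r : ℕ) : ℤ) - p + 1 + l)
          = fh p x (shiftSeq a (-((l : ℕ) : ℤ))) ((m : ℤ) - p + 1 + l - r) := by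
        intro l; congr 1; omega
      rw [Finset.sum_congr rfl (fun l _ => by rw [← hcst l])]
      rw [← hIH, sub_self, mul_zero]
    have hsingle := Finset.sum_eq_single_of_mem 0 (Finset.mem_range.mpr (by omega)) key2
    rw [hsingle, pow_zero, one_mul, Nat.cast_zero, fe_zero, one_mul] at key
    have harg : ∀ l : Fin p, fh p x (shiftSeq a (-((l : ℕ) : ℤ))) ((m : ℤ) - p + 1 + (l : ℕ) - 0)
        = fh p x (shiftSeq a (-((l : ℕ) : ℤ))) ((m : ℤ) - p + 1 + (l : ℕ)) := by
      intro l; congr 1; ring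
    have hsum : ∑ l : Fin p, fh p x (shiftSeq a (-((l : ℕ) : ℤ))) ((m : ℤ) - p + 1 + (l : ℕ) - 0) * C l j
        = ∑ l : Fin p, fh p x (shiftSeq a (-((l : ℕ) : ℤ))) ((m : ℤ) - p + 1 + (l : ℕ)) * C l j :=
      Finset.sum_congr rfl (fun l _ => by rw [harg l])
    rw [hsum, Nat.sub_zero] at key
    exact sub_eq_zero.mp key

end Master

lemma Alt_eq_JTm_mul (p : ℕ) (x : Fin p → R) (a : ℤ → R) (κ : Fin p → ℕ) :
    Alt p x a κ = JTm p x a κ * ((JTm p x a (fun _ => 0))⁻¹ * Alt p x a (fun _ => 0)) := by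
  ext i j
  rw [Matrix.mul_apply]
  show gfp (x j) a (κ i + (p - 1 - (i : ℕ))) = _
  rw [prop_gfp p x a (κ i + (p - 1 - (i : ℕ))) j]
  refine Finset.sum_congr rfl (fun l _ => ?_)
  have hip : (i : ℕ) < p := i.isLt
  have harg : ((κ i + (p - 1 - (i:ℕ)) : ℕ) : ℤ) - p + 1 + ((l : ℕ) : ℤ)
      = ((κ i : ℕ) : ℤ) - ((i:ℕ):ℤ) + ((l:ℕ):ℤ) := by omega
  rw [harg]
  rfl

lemma master (p : ℕ) (x : Fin p → R) (a : ℤ → R) (κ : Fin p → ℕ) :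
    (Alt p x a κ).det = fschur p κ x a * (Alt p x a (fun _ => 0)).det := by
  rw [Alt_eq_JTm_mul p x a κ, Matrix.det_mul, Matrix.det_mul, Matrix.det_nonsing_inv,
    det_JTm_zero, Ring.inverse_one, one_mul, fschur_eq_det_JTm]

lemma fh_map {S : Type*} [CommRing S] (f : R →+* S) (p : ℕ) (x : Fin p → R) (a : ℤ → R) (k : ℤ) :
    f (fh p x a k) = fh p (f ∘ x) (f ∘ a) k := by
  unfold fh
  split_ifs with h
  · rw [map_sum]
    refine Finset.sum_congr rfl (fun g _ => ?_)
    rw [map_prod]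
    exact Finset.prod_congr rfl (fun r _ => by rw [map_sub]; rfl)
  · exact map_zero f

lemma fschur_map {S : Type*} [CommRing S] (f : R →+* S) (p : ℕ) (lam : Fin p → ℕ)
    (x : Fin p → R) (a : ℤ → R) :
    f (fschur p lam x a) = fschur p lam (f ∘ x) (f ∘ a) := by
  unfold fschur
  rw [RingHom.map_det]
  congr 1
  ext i j
  simp only [RingHom.mapMatrix_apply, Matrix.map_apply, Matrix.of_apply]
  rw [fh_map]
  rfl

section Vanishing

open MvPolynomial

local notation "S" => MvPolynomial ℤ ℤ

lemma X_sub_X_ne {m t : ℤ} (h : m ≠ t) : (X m - X t : S) ≠ 0 :=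
  sub_ne_zero.mpr (fun he => h (MvPolynomial.X_injective he))

lemma gfp_X_zero {m : ℤ} {k : ℕ} (h1 : 1 ≤ m) (h2 : m ≤ (k : ℤ)) :
    gfp (X m : S) X k = 0 := by
  unfold gfp
  refine Finset.prod_eq_zero (i := (m - 1).toNat) (Finset.mem_range.mpr (by omega)) ?_
  rw [show ((((m - 1).toNat : ℕ) : ℤ) + 1) = m from by omega, sub_self]

lemma gfp_X_ne {m : ℤ} {k : ℕ} (h2 : (k : ℤ) < m) :
    gfp (X m : S) X k ≠ 0 := by
  unfold gfp
  rw [Finset.prod_ne_zero_iff]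
  intro i hi
  simp only [Finset.mem_range] at hi
  exact X_sub_X_ne (by omega)

/-- the specialization point `a_ν` -/
def aPt (p : ℕ) (nu : Fin p → ℕ) : Fin p → S :=
  fun j => X ((nu j : ℤ) + (p : ℤ) - ((j : ℕ) : ℤ))

lemma det_Alt_vanish (p : ℕ) (kap nu : Fin p → ℕ) (hk : Antitone kap) (hn : Antitone nu)
    (i0 : Fin p) (hlt : nu i0 < kap i0) :
    (Alt p (aPt p nu) X kap).det = 0 := by
  rw [Matrix.det_apply']
  refine Finset.sum_eq_zero (fun σ _ => ?_)
  have hex : ∃ c ∈ Finset.Ici i0, σ c ∈ Finset.Iic i0 := by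
    by_contra hno
    push_neg at hno
    have hmaps : ∀ c ∈ Finset.Ici i0, σ c ∈ Finset.Ioi i0 := by
      intro c hc
      have := hno c hc
      simp only [Finset.mem_Iic, not_le] at this
      exact Finset.mem_Ioi.mpr this
    have hcard := Finset.card_le_card_of_injOn σ hmaps (σ.injective.injOn)
    have hss : Finset.Ioi i0 ⊂ Finset.Ici i0 := by
      constructor
      · intro z hz
        exact Finset.mem_Ici.mpr (le_of_lt (Finset.mem_Ioi.mp hz))
      · intro hsub
        have := hsub (Finset.mem_Ici.mpr (le_refl i0))
        simp at this
    have := Finset.card_lt_card hss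
    omega
  obtain ⟨c, hc, hsc⟩ := hex
  have hzero : Alt p (aPt p nu) X kap (σ c) c = 0 := by
    show gfp (aPt p nu c) X (kap (σ c) + (p - 1 - ((σ c : Fin p) : ℕ))) = 0
    have h1 : kap i0 ≤ kap (σ c) := hk (Finset.mem_Iic.mp hsc)
    have h2 : nu c ≤ nu i0 := hn (Finset.mem_Ici.mp hc)
    have h3 : ((σ c : Fin p) : ℕ) ≤ (i0 : ℕ) := Fin.le_def.mp (Finset.mem_Iic.mp hsc)
    have h4 : (i0 : ℕ) ≤ (c : ℕ) := Fin.le_def.mp (Finset.mem_Ici.mp hc)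
    have h5 : (c : ℕ) < p := c.isLt
    refine gfp_X_zero (by omega) (by omega)
  rw [Finset.prod_eq_zero (f := fun i => Alt p (aPt p nu) X kap (σ i) i)
    (Finset.mem_univ c) hzero, mul_zero]

lemma det_Alt_diag_ne (p : ℕ) (nu : Fin p → ℕ) (hn : Antitone nu) :
    (Alt p (aPt p nu) X nu).det ≠ 0 := by
  have htri : (Alt p (aPt p nu) X nu).BlockTriangular OrderDual.toDual := by
    intro i j hij
    have hij' : (i : ℕ) < (j : ℕ) := hij
    show gfp (aPt p nu j) X (nu i + (p - 1 - (i : ℕ))) = 0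
    have h1 : nu j ≤ nu i := hn (le_of_lt hij)
    have h5 : (j : ℕ) < p := j.isLt
    exact gfp_X_zero (by omega) (by omega)
  rw [Matrix.det_of_lowerTriangular _ htri]
  rw [Finset.prod_ne_zero_iff]
  intro i _
  show gfp (aPt p nu i) X (nu i + (p - 1 - (i : ℕ))) ≠ 0
  have h5 : (i : ℕ) < p := i.isLt
  exact gfp_X_ne (by omega)

lemma det_Alt0_ne (p : ℕ) (nu : Fin p → ℕ) (hn : Antitone nu) :
    (Alt p (aPt p nu) X (fun _ => 0)).det ≠ 0 := by
  set v : Fin p → S := aPt p nu with hv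
  set q : Fin p → Polynomial S := fun d =>
    ∏ t ∈ Finset.range (d : ℕ), (Polynomial.X - Polynomial.C (X ((t : ℤ) + 1))) with hq
  have hmonic : ∀ d : Fin p, (q d).Monic := fun d =>
    Polynomial.monic_prod_of_monic _ _ (fun t _ => Polynomial.monic_X_sub_C _)
  have hdeg : ∀ d : Fin p, (q d).natDegree = (d : ℕ) := by
    intro d
    rw [hq]
    rw [Polynomial.natDegree_prod_of_monic _ _ (fun t _ => Polynomial.monic_X_sub_C _)]
    simp [Polynomial.natDegree_X_sub_C]
  have heval : ∀ (yv : S) (d : ℕ), Polynomial.eval yv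
      ((∏ t ∈ Finset.range d, (Polynomial.X - Polynomial.C (X ((t : ℤ) + 1)))) : Polynomial S)
      = gfp yv X d := by
    intro yv d
    rw [Polynomial.eval_prod, gfp]
    exact Finset.prod_congr rfl (fun t _ => by simp)
  have hvinj : Function.Injective v := by
    intro i j hij
    by_contra hne
    have : (nu i : ℤ) + p - i ≠ (nu j : ℤ) + p - j := by
      rcases lt_or_gt_of_ne (fun h : i = j => hne h) with h | h
      · have : nu j ≤ nu i := hn (le_of_lt h)
        have : (i : ℕ) < (j : ℕ) := h
        omega
      · have : nu i ≤ nu j := hn (le_of_lt h)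
        have : (j : ℕ) < (i : ℕ) := h
        omega
    exact this (MvPolynomial.X_injective hij)
  have hvdm := Matrix.det_eval_matrixOfPolynomials_eq_det_vandermonde v q hdeg hmonic
  have hne : (Matrix.of fun i j => (q j).eval (v i)).det ≠ 0 := by
    rw [← hvdm]
    exact Matrix.det_vandermonde_ne_zero_iff.mpr hvinj
  have hA : Alt p v X (fun _ => 0) =
      ((Matrix.of fun i j => (q j).eval (v i)).transpose).submatrix Fin.revPerm id := by
    refine Matrix.ext (fun i j => ?_)
    show gfp (v j) X (0 + (p - 1 - (i : ℕ))) = Polynomial.eval (v j) (q (Fin.revPerm i))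
    have hrev : ((Fin.revPerm i : Fin p) : ℕ) = p - 1 - (i : ℕ) := by
      show ((Fin.rev i : Fin p) : ℕ) = p - 1 - (i : ℕ)
      rw [Fin.val_rev]
      omega
    rw [show 0 + (p - 1 - (i : ℕ)) = p - 1 - (i : ℕ) from by omega, ← hrev]
    exact (heval (v j) _).symm
  rw [hA, Matrix.det_permute, Matrix.det_transpose]
  intro hcon
  rcases Int.units_eq_one_or (Equiv.Perm.sign Fin.revPerm) with h | h <;>
    rw [h] at hcon <;> simp at hcon <;> exact hne hcon

end Vanishing

section Main

open MvPolynomial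

local notation "S" => MvPolynomial ℤ ℤ

lemma fschur_eval (p : ℕ) (kap nu : Fin p → ℕ) :
    (MvPolynomial.aeval (aPt p nu))
      (fschur p kap (MvPolynomial.X : Fin p → MvPolynomial (Fin p) S)
        (fun i => MvPolynomial.C (MvPolynomial.X i))) = fschur p kap (aPt p nu) X := by
  have hmap := fschur_map ((MvPolynomial.aeval (aPt p nu) :
      MvPolynomial (Fin p) S →ₐ[S] S) : MvPolynomial (Fin p) S →+* S) p kap
    (MvPolynomial.X : Fin p → MvPolynomial (Fin p) S) (fun i => MvPolynomial.C (MvPolynomial.X i))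
  rw [show ((MvPolynomial.aeval (aPt p nu) : MvPolynomial (Fin p) S →ₐ[S] S) :
      MvPolynomial (Fin p) S →+* S) = (MvPolynomial.aeval (aPt p nu) :
      MvPolynomial (Fin p) S →ₐ[S] S).toRingHom from rfl] at hmap
  have h1 : ((MvPolynomial.aeval (aPt p nu) : MvPolynomial (Fin p) S →ₐ[S] S).toRingHom ∘
      (MvPolynomial.X : Fin p → MvPolynomial (Fin p) S)) = aPt p nu := by
    funext j; simp
  have h2 : ((MvPolynomial.aeval (aPt p nu) : MvPolynomial (Fin p) S →ₐ[S] S).toRingHom ∘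
      (fun i => MvPolynomial.C (MvPolynomial.X i))) = (X : ℤ → S) := by
    funext i; simp
  rw [h1, h2] at hmap
  exact hmap

lemma sEval_vanish (p : ℕ) (kap nu : Fin p → ℕ) (hk : Antitone kap) (hn : Antitone nu)
    (h : ¬ kap ≤ nu) : fschur p kap (aPt p nu) X = 0 := by
  obtain ⟨i0, hi0⟩ : ∃ i, nu i < kap i := by
    by_contra hcon
    push_neg at hcon
    exact h (fun i => hcon i)
  have hm := master p (aPt p nu) X kap
  rw [det_Alt_vanish p kap nu hk hn i0 hi0] at hm
  rcases mul_eq_zero.mp hm.symm with h' | h'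
  · exact h'
  · exact absurd h' (det_Alt0_ne p nu hn)

lemma sEval_nonvanish (p : ℕ) (nu : Fin p → ℕ) (hn : Antitone nu) :
    fschur p nu (aPt p nu) X ≠ 0 := by
  intro hcon
  have hm := master p (aPt p nu) X nu
  rw [hcon, zero_mul] at hm
  exact det_Alt_diag_ne p nu hn hm

end Main

/-- In the structure-constant expansion
    `s_λ(x|a)·s_μ(x|a) = Σ_ν c^ν_{λμ}(a)·s_ν(x|a)` (over `ℤ[a]`, `a_i` indeterminates),
    the coefficient `c^ν_{λμ}(a)` vanishes unless `λ ⊆ ν` and `μ ⊆ ν`; and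
    `c^μ_{λμ}(a) = s_λ(a_μ|a)` where `a_μ = (a_{μ_1+p},...,a_{μ_p+1})`. -/
theorem structure_constants_vanishing (p : ℕ)
    (lam mu : Fin p → ℕ) (hlam : Antitone lam) (hmu : Antitone mu)
    (c : {l : Fin p → ℕ // Antitone l} →₀ MvPolynomial ℤ ℤ)
    (hc : fschur p lam (MvPolynomial.X : Fin p → MvPolynomial (Fin p) (MvPolynomial ℤ ℤ))
            (fun i => MvPolynomial.C (MvPolynomial.X i)) *
          fschur p mu (MvPolynomial.X : Fin p → MvPolynomial (Fin p) (MvPolynomial ℤ ℤ))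
            (fun i => MvPolynomial.C (MvPolynomial.X i)) =
        c.sum (fun l r => r • fschur p l.1
            (MvPolynomial.X : Fin p → MvPolynomial (Fin p) (MvPolynomial ℤ ℤ))
            (fun i => MvPolynomial.C (MvPolynomial.X i)))) :
    (∀ nu : {l : Fin p → ℕ // Antitone l},
        (¬ lam ≤ nu.1 ∨ ¬ mu ≤ nu.1) → c nu = 0) ∧
    c ⟨mu, hmu⟩ =
      fschur p lam
        (fun j : Fin p => (MvPolynomial.X ((mu j : ℤ) + (p : ℤ) - (j : ℕ)) : MvPolynomial ℤ ℤ))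
        (fun i => MvPolynomial.X i) := by
  have EQ : ∀ nu : Fin p → ℕ,
      fschur p lam (aPt p nu) MvPolynomial.X * fschur p mu (aPt p nu) MvPolynomial.X =
      ∑ l ∈ c.support, c l * fschur p l.1 (aPt p nu) MvPolynomial.X := by
    intro nu
    have hφ := congrArg (MvPolynomial.aeval (aPt p nu)) hc
    rw [map_mul, fschur_eval, fschur_eval, Finsupp.sum, map_sum] at hφ
    rw [hφ]
    refine Finset.sum_congr rfl (fun l _ => ?_)
    rw [map_smul, smul_eq_mul, fschur_eval]
  have partA : ∀ nu : {l : Fin p → ℕ // Antitone l},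
      (¬ lam ≤ nu.1 ∨ ¬ mu ≤ nu.1) → c nu = 0 := by
    suffices H : ∀ n : ℕ, ∀ nu : {l : Fin p → ℕ // Antitone l},
        (∑ i, nu.1 i) = n → (¬ lam ≤ nu.1 ∨ ¬ mu ≤ nu.1) → c nu = 0 by
      intro nu h; exact H _ nu rfl h
    intro n
    induction n using Nat.strong_induction_on with | _ n IH =>
    intro nu hsum hbad
    have hL : fschur p lam (aPt p nu.1) MvPolynomial.X *
        fschur p mu (aPt p nu.1) MvPolynomial.X = 0 := by
      rcases hbad with h | h
      · rw [sEval_vanish p lam nu.1 hlam nu.2 h, zero_mul]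
      · rw [sEval_vanish p mu nu.1 hmu nu.2 h, mul_zero]
    have hR := EQ nu.1
    rw [hL] at hR
    have hterm : ∀ l ∈ c.support, l ≠ nu →
        c l * fschur p l.1 (aPt p nu.1) MvPolynomial.X = 0 := by
      intro l _ hlnu
      by_cases hle : l.1 ≤ nu.1
      · have hne : l.1 ≠ nu.1 := fun h => hlnu (Subtype.ext h)
        obtain ⟨i, hi⟩ := Function.ne_iff.mp hne
        have hlt : (∑ i, l.1 i) < n := by
          rw [← hsum]
          exact Finset.sum_lt_sum (fun i _ => hle i)
            ⟨i, Finset.mem_univ i, lt_of_le_of_ne (hle i) hi⟩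
        have hbad' : (¬ lam ≤ l.1 ∨ ¬ mu ≤ l.1) := by
          rcases hbad with h | h
          · exact Or.inl (fun hcon => h (le_trans hcon hle))
          · exact Or.inr (fun hcon => h (le_trans hcon hle))
        rw [IH _ hlt l rfl hbad', zero_mul]
      · rw [sEval_vanish p l.1 nu.1 l.2 nu.2 hle, mul_zero]
    rw [Finset.sum_eq_single nu hterm
      (fun hnotin => by rw [Finsupp.notMem_support_iff.mp hnotin, zero_mul])] at hR
    rcases mul_eq_zero.mp hR.symm with h' | h'
    · exact h'
    · exact absurd h' (sEval_nonvanish p nu.1 nu.2)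
  refine ⟨partA, ?_⟩
  have hR := EQ mu
  have hterm : ∀ l ∈ c.support, l ≠ ⟨mu, hmu⟩ →
      c l * fschur p l.1 (aPt p mu) MvPolynomial.X = 0 := by
    intro l _ hlmu
    by_cases hle : l.1 ≤ mu
    · have hne : l.1 ≠ mu := fun h => hlmu (Subtype.ext h)
      have hnm : ¬ mu ≤ l.1 := fun hcon => hne (le_antisymm hle hcon)
      rw [partA l (Or.inr hnm), zero_mul]
    · rw [sEval_vanish p l.1 mu l.2 hmu hle, mul_zero]
  rw [Finset.sum_eq_single ⟨mu, hmu⟩ hterm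
    (fun hnotin => by rw [Finsupp.notMem_support_iff.mp hnotin, zero_mul])] at hR
  have hcancel := mul_right_cancel₀ (sEval_nonvanish p mu hmu) hR.symm
  exact hcancel
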